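/- arXiv:math/0504606 — 3 statements merged into one kernel-verified Lean document; each statement's English description precedes it below -/
import Mathlib

section
/- For every w ∈ ℂ, the function C_w is differentiable on ℝ and satisfies C_w′(u) = Ai(u) − w·C_w(u) for all u ∈ ℝ. -/
/-!
Differentiating under the integral sign brings down the factor `i a` from the phase
`i (a³/3 + u a)`, and `i a / (w + i a) = 1 - w / (w + i a)`; so `C_w'(u) + w C_w(u)` is the Airy
integral taken over the contour through `-iM` instead of `0`. Shifting the contour vertically does
not change this integral: its derivative in the height is the integral of an exact derivative in
`r` of a function decaying like `exp (-|r|³/3)`. All integrands are dominated by Gaussians in `r`,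
locally uniformly in the parameters.
-/

open MeasureTheory

/-- The contour from `∞·e^{5iπ/6}` to `∞·e^{iπ/6}` passing through `−iM`:
`γ_M(r) = −iM + |r|·e^{5iπ/6}` for `r ≤ 0` and `γ_M(r) = −iM + r·e^{iπ/6}` for `r ≥ 0`. -/
noncomputable def airyContour (M : ℝ) (r : ℝ) : ℂ :=
  -Complex.I * (M : ℂ) +
    (if r ≤ 0 then ((-r : ℝ) : ℂ) * Complex.exp (Complex.I * (5 * (Real.pi : ℂ) / 6))
     else ((r : ℝ) : ℂ) * Complex.exp (Complex.I * ((Real.pi : ℂ) / 6)))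

/-- The derivative (velocity) of the contour `airyContour M`. -/
noncomputable def airyContourDeriv (r : ℝ) : ℂ :=
  if r ≤ 0 then -Complex.exp (Complex.I * (5 * (Real.pi : ℂ) / 6))
  else Complex.exp (Complex.I * ((Real.pi : ℂ) / 6))

/-- The Airy function `Ai(u) = (1/2π) ∫_Γ e^{i(ua + a³/3)} da` over the contour through `0`
from `∞·e^{5iπ/6}` to `∞·e^{iπ/6}`. -/
noncomputable def Airy (u : ℝ) : ℂ :=
  (1 / (2 * Real.pi)) *
    ∫ r : ℝ, Complex.exp (Complex.I * ((u : ℂ) * airyContour 0 r + (airyContour 0 r) ^ 3 / 3)) *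
      airyContourDeriv r

/-- `C_w(u) = (1/2π) ∫ e^{i(a³/3 + ua)}/(w + ia) da` over the contour through `−iM` with
`M = 2 + 2|w|`, so that the pole `a = iw` lies strictly above the contour. -/
noncomputable def CFun (w : ℂ) (u : ℝ) : ℂ :=
  (1 / (2 * Real.pi)) *
    ∫ r : ℝ,
      Complex.exp (Complex.I *
          ((airyContour (2 + 2 * ‖w‖) r) ^ 3 / 3 +
            (u : ℂ) * airyContour (2 + 2 * ‖w‖) r)) /
        (w + Complex.I * airyContour (2 + 2 * ‖w‖) r) *
      airyContourDeriv r

open Complex Filter Topology Set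
open scoped Real

lemma cexp_I_mul_pi_div_six : cexp (I * (π / 6)) = √3 / 2 + 1 / 2 * I := by
  rw [mul_comm, ← ofReal_ofNat, ← ofReal_div, exp_mul_I, ← ofReal_cos, ← ofReal_sin,
    Real.cos_pi_div_six, Real.sin_pi_div_six]
  push_cast; ring

lemma cexp_I_mul_five_pi_div_six : cexp (I * (5 * π / 6)) = -(√3 / 2) + 1 / 2 * I := by
  have h : 5 * (π : ℂ) / 6 = ((π - π / 6 : ℝ) : ℂ) := by push_cast; ring
  rw [h, mul_comm, exp_mul_I, ← ofReal_cos, ← ofReal_sin, Real.cos_pi_sub, Real.sin_pi_sub,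
    Real.cos_pi_div_six, Real.sin_pi_div_six]
  push_cast; ring

lemma airyContour_eq (M r : ℝ) :
    airyContour M r = ((√3 / 2 * r : ℝ) : ℂ) + ((|r| / 2 - M : ℝ) : ℂ) * I := by
  unfold airyContour
  split_ifs with h
  · rw [cexp_I_mul_five_pi_div_six, abs_of_nonpos h]; push_cast; ring
  · rw [cexp_I_mul_pi_div_six, abs_of_pos (not_le.1 h)]; push_cast; ring

lemma airyContour_re (M r : ℝ) : (airyContour M r).re = √3 / 2 * r := by
  simp [airyContour_eq]

lemma airyContour_im (M r : ℝ) : (airyContour M r).im = |r| / 2 - M := by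
  simp [airyContour_eq]

lemma norm_airyContourDeriv (r : ℝ) : ‖airyContourDeriv r‖ = 1 := by
  unfold airyContourDeriv
  split_ifs <;> simp [norm_exp, mul_comm I]

lemma norm_mul_airyContourDeriv (z : ℂ) (r : ℝ) : ‖z * airyContourDeriv r‖ = ‖z‖ := by
  rw [norm_mul, norm_airyContourDeriv, mul_one]

lemma sq_norm_airyContour (M r : ℝ) : ‖airyContour M r‖ ^ 2 = r ^ 2 - M * |r| + M ^ 2 := by
  rw [← normSq_eq_norm_sq, normSq_apply, airyContour_re, airyContour_im]
  have h3 : √3 * √3 = 3 := Real.mul_self_sqrt (by norm_num)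
  linear_combination (r ^ 2 / 4) * h3 + (1 / 4) * sq_abs r

lemma norm_airyContour_le (M r : ℝ) : ‖airyContour M r‖ ≤ |r| + |M| := by
  have h := sq_norm_airyContour M r
  nlinarith [norm_nonneg (airyContour M r), abs_nonneg r, abs_nonneg M, sq_abs r, sq_abs M,
    neg_abs_le M]

/-- `‖γ‖² = (|r| - M/2)² + 3M²/4` with `M = 2 + 2‖w‖` keeps the contour outside the disc of
radius `‖w‖ + 1`. -/
lemma one_le_norm_add_I_mul_airyContour (w : ℂ) (r : ℝ) :
    1 ≤ ‖w + I * airyContour (2 + 2 * ‖w‖) r‖ := by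
  have hsq := sq_norm_airyContour (2 + 2 * ‖w‖) r
  have hγ : 1 + ‖w‖ ≤ ‖airyContour (2 + 2 * ‖w‖) r‖ := by
    nlinarith [norm_nonneg w, norm_nonneg (airyContour (2 + 2 * ‖w‖) r), abs_nonneg r,
      sq_nonneg (|r| - (1 + ‖w‖)), sq_abs r]
  have htri : ‖I * airyContour (2 + 2 * ‖w‖) r‖ ≤ ‖w + I * airyContour (2 + 2 * ‖w‖) r‖ + ‖w‖ :=
    calc _ = ‖(w + I * airyContour (2 + 2 * ‖w‖) r) - w‖ := by ring_nf
      _ ≤ _ := norm_sub_le _ _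
  rw [norm_mul, norm_I, one_mul] at htri
  linarith

lemma add_I_mul_airyContour_ne_zero (w : ℂ) (r : ℝ) :
    w + I * airyContour (2 + 2 * ‖w‖) r ≠ 0 :=
  norm_pos_iff.1 (one_pos.trans_le (one_le_norm_add_I_mul_airyContour w r))

lemma continuous_airyContour (M : ℝ) : Continuous (airyContour M) := by
  refine continuous_const.add (Continuous.if_le ?_ ?_ continuous_id continuous_const ?_) <;>
    first
    | fun_prop
    | rintro r rfl; simp

lemma measurable_airyContourDeriv : Measurable airyContourDeriv :=
  Measurable.ite measurableSet_Iic measurable_const measurable_const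

lemma hasDerivAt_airyContour {r : ℝ} (hr : r ≠ 0) (M : ℝ) :
    HasDerivAt (airyContour M) (airyContourDeriv r) r := by
  rcases hr.lt_or_gt with hr | hr
  · have hlin := ((hasDerivAt_id (r : ℂ)).neg.mul_const
      (cexp (I * (5 * π / 6)))).comp_ofReal.const_add (-I * M)
    refine (hlin.congr_of_eventuallyEq ?_).congr_deriv ?_
    · filter_upwards [Iio_mem_nhds hr] with x hx
      simp [airyContour, (mem_Iio.1 hx).le]
    · simp [airyContourDeriv, hr.le]
  · have hlin := ((hasDerivAt_id (r : ℂ)).mul_const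
      (cexp (I * (π / 6)))).comp_ofReal.const_add (-I * M)
    refine (hlin.congr_of_eventuallyEq ?_).congr_deriv ?_
    · filter_upwards [Ioi_mem_nhds hr] with x hx
      simp [airyContour, not_le.2 (mem_Ioi.1 hx)]
    · simp [airyContourDeriv, not_le.2 hr]

lemma hasDerivAt_airyContour_height (M r : ℝ) :
    HasDerivAt (fun t : ℝ ↦ airyContour t r) (-I) M := by
  unfold airyContour
  apply HasDerivAt.add_const
  simpa using (hasDerivAt_id (M : ℂ)).comp_ofReal.const_mul (-I)

/-- The summands are in the order of `CFun`; `Airy` has them swapped. -/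
noncomputable def airyPhase (u : ℝ) (a : ℂ) : ℂ := I * (a ^ 3 / 3 + u * a)

lemma re_airyPhase (u : ℝ) (a : ℂ) :
    (airyPhase u a).re = a.im ^ 3 / 3 - a.re ^ 2 * a.im - u * a.im := by
  simp only [airyPhase, pow_succ, pow_zero, one_mul, mul_re, I_re, add_re, div_ofNat_re, mul_im,
    ofReal_re, ofReal_im, I_im, add_im, div_ofNat_im]
  ring

lemma hasDerivAt_airyPhase (u : ℝ) (z : ℂ) : HasDerivAt (airyPhase u) (I * (z ^ 2 + u)) z :=
  (((hasDerivAt_pow 3 z).div_const 3).add ((hasDerivAt_id z).const_mul (u : ℂ))).const_mul I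
    |>.congr_deriv (by push_cast; ring)

lemma continuous_airyPhase (u : ℝ) : Continuous (airyPhase u) := by
  unfold airyPhase; fun_prop

lemma exists_cubic_le (a b : ℝ) : ∃ K, ∀ s : ℝ, 0 ≤ s → a * s ^ 2 + b * s - s ^ 3 / 3 ≤ K := by
  set m := |a| + |b| + 1
  refine ⟨12 * m ^ 3, fun s hs ↦ ?_⟩
  have hm : 1 ≤ m := by simp only [m]; linarith [abs_nonneg a, abs_nonneg b]
  have ha : a * s ^ 2 ≤ |a| * s ^ 2 := mul_le_mul_of_nonneg_right (le_abs_self a) (by positivity)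
  have hb : b * s ≤ |b| * s := mul_le_mul_of_nonneg_right (le_abs_self b) hs
  rcases le_total s (3 * m) with hsm | hsm
  · nlinarith [abs_nonneg a, abs_nonneg b, mul_le_mul hsm hsm hs (by linarith)]
  · have hs1 : s ≤ s ^ 2 := by nlinarith
    have hms : m * s ^ 2 = |a| * s ^ 2 + |b| * s ^ 2 + s ^ 2 := by simp only [m]; ring
    nlinarith [abs_nonneg a, abs_nonneg b, mul_le_mul_of_nonneg_left hsm (sq_nonneg s),
      mul_le_mul_of_nonneg_left hs1 (abs_nonneg b), pow_pos (by linarith : (0 : ℝ) < m) 3]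

/-- The actual decay is like `exp (-|r|³/3)`. -/
lemma exists_norm_cexp_airyPhase_le (T U : ℝ) :
    ∃ C, ∀ t u r : ℝ, |t| ≤ T → |u| ≤ U →
      (1 + ‖airyContour t r‖) ^ 2 * ‖cexp (airyPhase u (airyContour t r))‖ ≤
        C * rexp (-r ^ 2) := by
  obtain ⟨K, hK⟩ := exists_cubic_le (T / 2 + 1) ((T ^ 2 + U) / 2 + 2)
  refine ⟨rexp (K + T ^ 3 / 3 + U * T + 2 * T), fun t u r ht hu ↦ ?_⟩
  have h3 : √3 ^ 2 = 3 := Real.sq_sqrt (by norm_num)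
  have hre : (airyPhase u (airyContour t r)).re =
      -|r| ^ 3 / 3 + t * |r| ^ 2 / 2 + t ^ 2 * |r| / 2 - t ^ 3 / 3 - u * |r| / 2 + u * t := by
    rw [re_airyPhase, airyContour_re, airyContour_im, mul_pow, div_pow, h3, ← sq_abs r]
    ring
  have hweight : (1 + ‖airyContour t r‖) ^ 2 ≤ rexp (2 * (|r| + T)) := by
    rw [mul_comm, Real.exp_mul, Real.rpow_two]
    gcongr
    linarith [norm_airyContour_le t r, Real.add_one_le_exp (|r| + T)]
  have hs := abs_nonneg r
  have hU : 0 ≤ U := (abs_nonneg u).trans hu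
  have hphase : (airyPhase u (airyContour t r)).re ≤
      (T / 2) * |r| ^ 2 + ((T ^ 2 + U) / 2) * |r| - |r| ^ 3 / 3 + T ^ 3 / 3 + U * T := by
    rw [hre, ← sq_abs t]
    have hut : u * t ≤ U * T :=
      (le_abs_self _).trans ((abs_mul u t).trans_le (mul_le_mul hu ht (abs_nonneg t) hU))
    have ht3 : -t ^ 3 ≤ T ^ 3 :=
      (neg_le_abs _).trans ((abs_pow t 3).trans_le (pow_le_pow_left₀ (abs_nonneg t) ht 3))
    linarith [mul_le_mul_of_nonneg_right (le_of_abs_le ht) (sq_nonneg |r|),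
      mul_le_mul_of_nonneg_right (pow_le_pow_left₀ (abs_nonneg t) ht 2) hs,
      mul_le_mul_of_nonneg_right (neg_le_of_abs_le hu) hs]
  calc (1 + ‖airyContour t r‖) ^ 2 * ‖cexp (airyPhase u (airyContour t r))‖
      ≤ rexp (2 * (|r| + T)) * rexp (airyPhase u (airyContour t r)).re := by
        rw [norm_exp]; gcongr
    _ ≤ rexp (K + T ^ 3 / 3 + U * T + 2 * T) * rexp (-r ^ 2) := by
        rw [← Real.exp_add, ← Real.exp_add, Real.exp_le_exp]
        nlinarith [hK |r| hs, sq_abs r]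

lemma le_one_add_norm_sq_mul {a : ℂ} {x : ℝ} (hx : 0 ≤ x) : x ≤ (1 + ‖a‖) ^ 2 * x :=
  le_mul_of_one_le_left hx (one_le_pow₀ (le_add_of_nonneg_right (norm_nonneg a)))

lemma integrable_exp_neg_sq : Integrable fun x : ℝ ↦ rexp (-x ^ 2) := by
  simpa using integrable_exp_neg_mul_sq one_pos

lemma tendsto_exp_neg_sq_cocompact : Tendsto (fun x : ℝ ↦ rexp (-x ^ 2)) (cocompact ℝ) (𝓝 0) := by
  simpa using tendsto_rpow_abs_mul_exp_neg_mul_sq_cocompact one_pos 0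

section GaussianDomination

variable {E : Type*} [NormedAddCommGroup E]

lemma integrable_of_norm_le_mul_exp_neg_sq {g : ℝ → E} {C : ℝ} (hg : AEStronglyMeasurable g)
    (h : ∀ r, ‖g r‖ ≤ C * rexp (-r ^ 2)) : Integrable g :=
  (integrable_exp_neg_sq.const_mul C).mono' hg (ae_of_all _ h)

lemma hasDerivAt_integral_of_norm_le_mul_exp_neg_sq [NormedSpace ℝ E] {F F' : ℝ → ℝ → E}
    {x₀ C : ℝ} (hF_meas : ∀ x, AEStronglyMeasurable (F x)) (hF_int : Integrable (F x₀))
    (hF'_meas : AEStronglyMeasurable (F' x₀)) (hF' : ∀ x r, HasDerivAt (F · r) (F' x r) x)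
    (h_bound : ∀ x ∈ Metric.ball x₀ 1, ∀ r, ‖F' x r‖ ≤ C * rexp (-r ^ 2)) :
    HasDerivAt (fun x ↦ ∫ r, F x r) (∫ r, F' x₀ r) x₀ :=
  (hasDerivAt_integral_of_dominated_loc_of_deriv_le (Metric.ball_mem_nhds x₀ one_pos)
    (Eventually.of_forall hF_meas) hF_int hF'_meas (ae_of_all _ fun r x hx ↦ h_bound x hx r)
    (integrable_exp_neg_sq.const_mul C) (ae_of_all _ fun r x _ ↦ hF' x r)).2

end GaussianDomination

lemma aestronglyMeasurable_comp_airyContour_mul_deriv {g : ℂ → ℂ} (hg : Measurable g) (t : ℝ) :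
    AEStronglyMeasurable fun r ↦ g (airyContour t r) * airyContourDeriv r :=
  ((hg.comp (continuous_airyContour t).measurable).mul
    measurable_airyContourDeriv).aestronglyMeasurable

lemma integrable_comp_airyContour_mul_deriv {g : ℂ → ℂ} (hg : Measurable g) {t C : ℝ}
    (h : ∀ r, ‖g (airyContour t r)‖ ≤ C * rexp (-r ^ 2)) :
    Integrable fun r ↦ g (airyContour t r) * airyContourDeriv r :=
  integrable_of_norm_le_mul_exp_neg_sq (aestronglyMeasurable_comp_airyContour_mul_deriv hg t)
    fun r ↦ (norm_mul_airyContourDeriv _ r).trans_le (h r)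

section ContourShift

variable {f f' : ℂ → ℂ}

lemma integral_deriv_comp_airyContour_eq_zero (hf : ∀ z, HasDerivAt f (f' z) z) {t : ℝ}
    (hint : Integrable fun r ↦ f' (airyContour t r) * airyContourDeriv r)
    (hlim : Tendsto (fun r ↦ f (airyContour t r)) (cocompact ℝ) (𝓝 0)) :
    ∫ r, f' (airyContour t r) * airyContourDeriv r = 0 := by
  have hcont : Continuous fun r ↦ f (airyContour t r) :=
    (continuous_iff_continuousAt.2 fun z ↦ (hf z).continuousAt).comp (continuous_airyContour t)
  have hderiv : ∀ r ≠ 0, HasDerivAt (fun r ↦ f (airyContour t r))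
      (f' (airyContour t r) * airyContourDeriv r) r :=
    fun r hr ↦ (hf _).comp r (hasDerivAt_airyContour hr t)
  rw [← intervalIntegral.integral_Iic_add_Ioi hint.integrableOn hint.integrableOn,
    integral_Iic_of_hasDerivAt_of_tendsto hcont.continuousWithinAt
      (fun r hr ↦ hderiv r hr.ne) hint.integrableOn (hlim.mono_left atBot_le_cocompact),
    integral_Ioi_of_hasDerivAt_of_tendsto hcont.continuousWithinAt
      (fun r hr ↦ hderiv r hr.ne') hint.integrableOn (hlim.mono_left atTop_le_cocompact)]
  ring

/-- The `t`-derivative of the integrand is `-i` times the `r`-derivative of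
`f ∘ airyContour t`, whose integral vanishes. -/
theorem integral_comp_airyContour_mul_deriv_eq (hf : ∀ z, HasDerivAt f (f' z) z)
    (hdecay : ∀ T, ∃ C, ∀ t r, |t| ≤ T →
      ‖f (airyContour t r)‖ ≤ C * rexp (-r ^ 2) ∧ ‖f' (airyContour t r)‖ ≤ C * rexp (-r ^ 2))
    (t₁ t₂ : ℝ) :
    ∫ r, f (airyContour t₁ r) * airyContourDeriv r =
      ∫ r, f (airyContour t₂ r) * airyContourDeriv r := by
  have hf_meas : Measurable f :=
    (continuous_iff_continuousAt.2 fun z ↦ (hf z).continuousAt).measurable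
  have hf'_meas : Measurable f' := by
    simpa only [funext fun z ↦ (hf z).deriv] using measurable_deriv f
  suffices hzero : ∀ t, HasDerivAt
      (fun t ↦ ∫ r, f (airyContour t r) * airyContourDeriv r) 0 t from
    is_const_of_deriv_eq_zero (fun t ↦ (hzero t).differentiableAt) (fun t ↦ (hzero t).deriv) t₁ t₂
  intro t
  obtain ⟨C, hC⟩ := hdecay (|t| + 1)
  have hCt r := hC t r (by linarith)
  have hdiff := hasDerivAt_integral_of_norm_le_mul_exp_neg_sq (x₀ := t) (C := C)
    (F' := fun s r ↦ -I * (f' (airyContour s r) * airyContourDeriv r))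
    (fun s ↦ aestronglyMeasurable_comp_airyContour_mul_deriv hf_meas s)
    (integrable_comp_airyContour_mul_deriv hf_meas fun r ↦ (hCt r).1)
    ((aestronglyMeasurable_comp_airyContour_mul_deriv hf'_meas t).const_mul _)
    (fun s r ↦ (((hf _).comp s (hasDerivAt_airyContour_height s r)).mul_const _).congr_deriv
      (by ring))
    (fun s hs r ↦ by
      rw [norm_mul, norm_neg, norm_I, one_mul, norm_mul_airyContourDeriv]
      exact (hC s r (norm_lt_of_mem_ball hs).le).2)
  have hlim : Tendsto (fun r ↦ f (airyContour t r)) (cocompact ℝ) (𝓝 0) :=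
    squeeze_zero_norm (fun r ↦ (hCt r).1) (by simpa using tendsto_exp_neg_sq_cocompact.const_mul C)
  rwa [integral_const_mul, integral_deriv_comp_airyContour_eq_zero hf
    (integrable_comp_airyContour_mul_deriv hf'_meas fun r ↦ (hCt r).2) hlim, mul_zero] at hdiff

end ContourShift

lemma integral_cexp_airyPhase_airyContour_eq (u t₁ t₂ : ℝ) :
    ∫ r, cexp (airyPhase u (airyContour t₁ r)) * airyContourDeriv r =
      ∫ r, cexp (airyPhase u (airyContour t₂ r)) * airyContourDeriv r := by
  refine integral_comp_airyContour_mul_deriv_eq (fun z ↦ (hasDerivAt_airyPhase u z).cexp)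
    (fun T ↦ ?_) t₁ t₂
  obtain ⟨C, hC⟩ := exists_norm_cexp_airyPhase_le T |u|
  refine ⟨(1 + |u|) * C, fun t r ht ↦ ?_⟩
  set γ := airyContour t r
  have hCr := hC t u r ht le_rfl
  have hu := abs_nonneg u
  have he := (le_one_add_norm_sq_mul (a := γ) (norm_nonneg (cexp (airyPhase u γ)))).trans hCr
  have hpoly : ‖γ ^ 2 + u‖ ≤ (1 + |u|) * (1 + ‖γ‖) ^ 2 := by
    have := norm_nonneg γ
    calc _ ≤ ‖γ‖ ^ 2 + |u| := (norm_add_le _ _).trans_eq (by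
          rw [norm_pow, norm_real, Real.norm_eq_abs])
      _ ≤ _ := by nlinarith
  constructor
  · nlinarith [mul_nonneg hu ((norm_nonneg _).trans he)]
  · rw [norm_mul, norm_mul, norm_I, one_mul, mul_comm]
    calc _ ≤ (1 + |u|) * (1 + ‖γ‖) ^ 2 * ‖cexp (airyPhase u γ)‖ :=
          mul_le_mul_of_nonneg_right hpoly (norm_nonneg _)
      _ ≤ _ := by
          have := mul_le_mul_of_nonneg_left hCr (by positivity : (0 : ℝ) ≤ 1 + |u|)
          linarith

lemma Airy_eq (u : ℝ) :
    Airy u = 1 / (2 * π) * ∫ r, cexp (airyPhase u (airyContour 0 r)) * airyContourDeriv r := by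
  simp only [Airy, airyPhase, add_comm]

noncomputable def airyCauchy (w : ℂ) (u : ℝ) (a : ℂ) : ℂ := cexp (airyPhase u a) / (w + I * a)

lemma CFun_eq (w : ℂ) (u : ℝ) :
    CFun w u = 1 / (2 * π) *
      ∫ r, airyCauchy w u (airyContour (2 + 2 * ‖w‖) r) * airyContourDeriv r :=
  rfl

lemma measurable_airyCauchy (w : ℂ) (u : ℝ) : Measurable (airyCauchy w u) := by
  unfold airyCauchy airyPhase; fun_prop

/-- The identity `i a / (w + i a) = 1 - w / (w + i a)` behind the differential equation. -/
lemma hasDerivAt_airyCauchy {w a : ℂ} (hw : w + I * a ≠ 0) (u : ℝ) :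
    HasDerivAt (fun y : ℝ ↦ airyCauchy w y a) (cexp (airyPhase u a) - w * airyCauchy w u a) u := by
  have h := ((((hasDerivAt_id u).ofReal_comp.mul_const a).const_add (a ^ 3 / 3)).const_mul
    I).cexp.div_const (w + I * a)
  refine h.congr_deriv ?_
  simp only [airyCauchy, airyPhase, id, ofReal_one]
  field_simp
  ring

lemma exists_norm_airyCauchy_le (w : ℂ) (U : ℝ) :
    ∃ C, ∀ u r : ℝ, |u| ≤ U →
      ‖cexp (airyPhase u (airyContour (2 + 2 * ‖w‖) r))‖ ≤ C * rexp (-r ^ 2) ∧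
        ‖airyCauchy w u (airyContour (2 + 2 * ‖w‖) r)‖ ≤ C * rexp (-r ^ 2) := by
  obtain ⟨C, hC⟩ := exists_norm_cexp_airyPhase_le (2 + 2 * ‖w‖) U
  refine ⟨C, fun u r hu ↦ ?_⟩
  have he := (le_one_add_norm_sq_mul (norm_nonneg _)).trans
    (hC _ u r (abs_of_nonneg (by positivity)).le hu)
  refine ⟨he, ?_⟩
  rw [airyCauchy, norm_div]
  exact (div_le_self (norm_nonneg _) (one_le_norm_add_I_mul_airyContour w r)).trans he

lemma hasDerivAt_integral_airyCauchy (w : ℂ) (u : ℝ) :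
    HasDerivAt (fun y ↦ ∫ r, airyCauchy w y (airyContour (2 + 2 * ‖w‖) r) * airyContourDeriv r)
      ((∫ r, cexp (airyPhase u (airyContour (2 + 2 * ‖w‖) r)) * airyContourDeriv r) -
        w * ∫ r, airyCauchy w u (airyContour (2 + 2 * ‖w‖) r) * airyContourDeriv r) u := by
  set M := 2 + 2 * ‖w‖
  obtain ⟨C, hC⟩ := exists_norm_airyCauchy_le w (|u| + 1)
  have hCu r := hC u r (by linarith)
  have hexp_meas : Measurable fun z ↦ cexp (airyPhase u z) :=
    (continuous_exp.comp (continuous_airyPhase u)).measurable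
  have hq_int := integrable_comp_airyContour_mul_deriv (measurable_airyCauchy w u) (t := M)
    fun r ↦ (hCu r).2
  rw [← integral_const_mul, ← integral_sub
    (integrable_comp_airyContour_mul_deriv hexp_meas fun r ↦ (hCu r).1) (hq_int.const_mul w)]
  refine hasDerivAt_integral_of_norm_le_mul_exp_neg_sq (C := (1 + ‖w‖) * C)
    (F' := fun y r ↦ cexp (airyPhase y (airyContour M r)) * airyContourDeriv r -
      w * (airyCauchy w y (airyContour M r) * airyContourDeriv r))
    (fun y ↦ aestronglyMeasurable_comp_airyContour_mul_deriv (measurable_airyCauchy w y) M) hq_int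
    ((aestronglyMeasurable_comp_airyContour_mul_deriv hexp_meas M).sub
      (hq_int.aestronglyMeasurable.const_mul w))
    (fun y r ↦ ((hasDerivAt_airyCauchy (add_I_mul_airyContour_ne_zero w r) y).mul_const _
      ).congr_deriv (by ring))
    (fun y hy r ↦ ?_)
  obtain ⟨he, hq⟩ := hC y r (norm_lt_of_mem_ball hy).le
  refine (norm_sub_le _ _).trans ?_
  rw [norm_mul_airyContourDeriv, norm_mul, norm_mul_airyContourDeriv]
  nlinarith [norm_nonneg w]

/-- for every `w ∈ ℂ`, `C_w` is differentiable on `ℝ` with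
`C_w′(u) = Ai(u) − w·C_w(u)`. -/
theorem CFun_hasDerivAt (w : ℂ) (u : ℝ) :
    HasDerivAt (CFun w) (Airy u - w * CFun w u) u := by
  have h := (hasDerivAt_integral_airyCauchy w u).const_mul (1 / (2 * (π : ℂ)))
  rw [integral_cexp_airyPhase_airyContour_eq u _ 0] at h
  refine h.congr_deriv ?_
  rw [Airy_eq, CFun_eq]
  ring
end

section
/- Let u: ℝ → ℝ be twice differentiable and satisfy u″(x) = 2u(x)³ + x·u(x) for all x, let 𝓔: ℝ → ℝ be differentiable with 𝓔′(x) = −u(x)·𝓔(x), and let f, g: ℝ × ℝ → ℝ be smooth and satisfy, for all (x,w): ∂_x f = u g, ∂_x g = u f − w g, ∂_w f = u² f − (w u + u′) g, ∂_w g = (−w u + u′) f + (w² − x − u²) g, together with f(x,0) = 𝓔(x) and g(x,0) = −𝓔(x). Then for all x: det( [∂_w^{m−1}((w + ∂_x)^{n−1} f)](x, 0) )_{1≤m,n≤2} = 𝓔(x)² · ( 1 + u(x)·( x + 2u(x)² + 2u′(x) ) ). -/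
/-- The `n`-fold application of the operator `h ↦ w·h + ∂h/∂x` on functions of `(x, w)`. -/
noncomputable def laxOp : ℕ → (ℝ → ℝ → ℝ) → (ℝ → ℝ → ℝ)
  | 0, h => h
  | n + 1, h => fun x w => w * laxOp n h x w + deriv (fun y => laxOp n h y w) x

/-- let `u` solve Painlevé II `u″ = 2u³ + xu`, let `𝓔′ = −u·𝓔`, and let
`f, g` be smooth solutions of the Lax pair `∂_x f = u g`, `∂_x g = u f − w g`,
`∂_w f = u² f − (wu + u′) g`, `∂_w g = (−wu + u′) f + (w² − x − u²) g` with
`f(x,0) = 𝓔(x)`, `g(x,0) = −𝓔(x)`. Then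
`det([∂_w^{m−1}((w + ∂_x)^{n−1} f)](x,0))_{1≤m,n≤2} = 𝓔(x)²·(1 + u(x)·(x + 2u(x)² + 2u′(x)))`. -/
theorem det_two_by_two_lax (u 𝓔 : ℝ → ℝ)
    (hu : Differentiable ℝ u) (hu' : Differentiable ℝ (deriv u))
    (hPII : ∀ x, deriv (deriv u) x = 2 * u x ^ 3 + x * u x)
    (h𝓔 : Differentiable ℝ 𝓔) (h𝓔' : ∀ x, deriv 𝓔 x = -(u x * 𝓔 x))
    (f g : ℝ → ℝ → ℝ)
    (hf : ContDiff ℝ (⊤ : ℕ∞) fun p : ℝ × ℝ => f p.1 p.2)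
    (hg : ContDiff ℝ (⊤ : ℕ∞) fun p : ℝ × ℝ => g p.1 p.2)
    (hfx : ∀ x w, deriv (fun y => f y w) x = u x * g x w)
    (hgx : ∀ x w, deriv (fun y => g y w) x = u x * f x w - w * g x w)
    (hfw : ∀ x w, deriv (fun ω => f x ω) w
      = u x ^ 2 * f x w - (w * u x + deriv u x) * g x w)
    (hgw : ∀ x w, deriv (fun ω => g x ω) w
      = (-(w * u x) + deriv u x) * f x w + (w ^ 2 - x - u x ^ 2) * g x w)
    (hf0 : ∀ x, f x 0 = 𝓔 x) (hg0 : ∀ x, g x 0 = -𝓔 x)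
    (x : ℝ) :
    Matrix.det (Matrix.of fun m n : Fin 2 =>
        iteratedDeriv (m : ℕ) (fun w => laxOp (n : ℕ) f x w) 0) =
      𝓔 x ^ 2 * (1 + u x * (x + 2 * u x ^ 2 + 2 * deriv u x)) := by
  have hfd : Differentiable ℝ (fun w => f x w) :=
    by
      have := (hf.differentiable (by simp)).comp
        (Differentiable.prodMk (differentiable_const (𝕜 := ℝ) x) differentiable_id)
      exact this
  have hgd : Differentiable ℝ (fun w => g x w) :=
    by
      have := (hg.differentiable (by simp)).comp
        (Differentiable.prodMk (differentiable_const (𝕜 := ℝ) x) differentiable_id)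
      exact this
  -- laxOp 1 f x w = w * f x w + u x * g x w
  have hlax1 : ∀ w, laxOp 1 f x w = w * f x w + u x * g x w := by
    intro w
    simp [laxOp, hfx x w]
  have e00 : iteratedDeriv 0 (fun w => laxOp 0 f x w) 0 = 𝓔 x := by
    simp [laxOp, hf0]
  have e01 : iteratedDeriv 0 (fun w => laxOp 1 f x w) 0 = -(u x * 𝓔 x) := by
    simp [hlax1, hg0]
  have e10 : iteratedDeriv 1 (fun w => laxOp 0 f x w) 0
      = 𝓔 x * (u x ^ 2 + deriv u x) := by
    show iteratedDeriv 1 (fun w => f x w) 0 = _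
    rw [iteratedDeriv_one, hfw x 0, hf0, hg0]
    ring
  have e11 : iteratedDeriv 1 (fun w => laxOp 1 f x w) 0
      = 𝓔 x + u x * 𝓔 x * (deriv u x + x + u x ^ 2) := by
    rw [iteratedDeriv_one]
    have : deriv (fun w => laxOp 1 f x w) 0
        = deriv (fun w => w * f x w + u x * g x w) 0 := by
      congr 1; funext w; exact hlax1 w
    have hD : HasDerivAt (fun w => w * f x w + u x * g x w)
        (1 * f x 0 + 0 * deriv (fun ω => f x ω) 0
          + u x * deriv (fun ω => g x ω) 0) 0 :=
      (((hasDerivAt_id 0).mul (hfd 0).hasDerivAt).add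
        ((hgd 0).hasDerivAt.const_mul (u x)))
    rw [this, hD.deriv, hgw x 0, hf0, hg0]
    ring
  rw [Matrix.det_fin_two]
  simp only [Matrix.of_apply, Fin.isValue, Fin.val_zero, Fin.val_one]
  rw [e00, e01, e10, e11]
  ring
end

section
/- Let u: ℝ → ℝ be twice differentiable and satisfy u″(x) = 2u(x)³ + x·u(x) for all x, let 𝓔: ℝ → ℝ be differentiable with 𝓔′(x) = −u(x)·𝓔(x), and let f, g: ℝ × ℝ → ℝ be smooth and satisfy, for all (x,w): ∂_x f = u g, ∂_x g = u f − w g, ∂_w f = u² f − (w u + u′) g, ∂_w g = (−w u + u′) f + (w² − x − u²) g, together with f(x,0) = 𝓔(x) and g(x,0) = −𝓔(x). Then for all x: (1/2) · det( [∂_w^{m−1}((w + ∂_x)^{n−1} f)](x, 0) )_{1≤m,n≤3} = 𝓔(x)³ · ( 1 + 2u·(x + 2u² + 2u′) + (1/2)(u² − u′)·(x + 2u² + 2u′)² ), where u, u′ are evaluated at x. -/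
/-- helper: derivative of `P·F + Q·G`. -/
theorem pq_hasDerivAt {F G P Q : ℝ → ℝ} {w fv gv pv qv : ℝ}
    (hP : HasDerivAt P pv w) (hF : HasDerivAt F fv w)
    (hQ : HasDerivAt Q qv w) (hG : HasDerivAt G gv w) :
    HasDerivAt (fun t => P t * F t + Q t * G t)
      (pv * F w + P w * fv + (qv * G w + Q w * gv)) w :=
  (hP.mul hF).add (hQ.mul hG)

/-- under the same hypotheses as Statement 14,
`(1/2)·det([∂_w^{m−1}((w + ∂_x)^{n−1} f)](x,0))_{1≤m,n≤3}
  = 𝓔(x)³·(1 + 2u·(x + 2u² + 2u′) + (1/2)(u² − u′)·(x + 2u² + 2u′)²)`. -/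
theorem det_three_by_three_lax (u 𝓔 : ℝ → ℝ)
    (hu : Differentiable ℝ u) (hu' : Differentiable ℝ (deriv u))
    (hPII : ∀ x, deriv (deriv u) x = 2 * u x ^ 3 + x * u x)
    (h𝓔 : Differentiable ℝ 𝓔) (h𝓔' : ∀ x, deriv 𝓔 x = -(u x * 𝓔 x))
    (f g : ℝ → ℝ → ℝ)
    (hf : ContDiff ℝ (⊤ : ℕ∞) fun p : ℝ × ℝ => f p.1 p.2)
    (hg : ContDiff ℝ (⊤ : ℕ∞) fun p : ℝ × ℝ => g p.1 p.2)
    (hfx : ∀ x w, deriv (fun y => f y w) x = u x * g x w)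
    (hgx : ∀ x w, deriv (fun y => g y w) x = u x * f x w - w * g x w)
    (hfw : ∀ x w, deriv (fun ω => f x ω) w
      = u x ^ 2 * f x w - (w * u x + deriv u x) * g x w)
    (hgw : ∀ x w, deriv (fun ω => g x ω) w
      = (-(w * u x) + deriv u x) * f x w + (w ^ 2 - x - u x ^ 2) * g x w)
    (hf0 : ∀ x, f x 0 = 𝓔 x) (hg0 : ∀ x, g x 0 = -𝓔 x)
    (x : ℝ) :
    (1 / 2 : ℝ) * Matrix.det (Matrix.of fun m n : Fin 3 =>
        iteratedDeriv (m : ℕ) (fun w => laxOp (n : ℕ) f x w) 0) =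
      𝓔 x ^ 3 * (1 + 2 * u x * (x + 2 * u x ^ 2 + 2 * deriv u x) +
        (1 / 2) * (u x ^ 2 - deriv u x) * (x + 2 * u x ^ 2 + 2 * deriv u x) ^ 2) := by
  -- abbreviations
  set A := u x with hA
  set B := deriv u x with hB
  set E := 𝓔 x with hE
  -- differentiability in each variable
  have hfcx : ∀ w : ℝ, ContDiff ℝ (⊤ : ℕ∞) fun y : ℝ => f y w := fun w =>
    hf.comp (contDiff_id.prodMk contDiff_const)
  have hgcx : ∀ w : ℝ, ContDiff ℝ (⊤ : ℕ∞) fun y : ℝ => g y w := fun w =>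
    hg.comp (contDiff_id.prodMk contDiff_const)
  have hfcw : ContDiff ℝ (⊤ : ℕ∞) fun ω : ℝ => f x ω := hf.comp (contDiff_const.prodMk contDiff_id)
  have hgcw : ContDiff ℝ (⊤ : ℕ∞) fun ω : ℝ => g x ω := hg.comp (contDiff_const.prodMk contDiff_id)
  -- HasDerivAt in x
  have hFx : ∀ (w y : ℝ), HasDerivAt (fun y => f y w) (u y * g y w) y := by
    intro w y
    have h := (((hfcx w).differentiable (by simp)) y).hasDerivAt
    rwa [hfx y w] at h
  have hGx : ∀ (w y : ℝ), HasDerivAt (fun y => g y w) (u y * f y w - w * g y w) y := by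
    intro w y
    have h := (((hgcx w).differentiable (by simp)) y).hasDerivAt
    rwa [hgx y w] at h
  -- HasDerivAt in w
  have hFd : ∀ w : ℝ, HasDerivAt (fun ω => f x ω)
      (A ^ 2 * f x w - (w * A + B) * g x w) w := by
    intro w
    have h := ((hfcw.differentiable (by simp)) w).hasDerivAt
    rwa [hfw x w] at h
  have hGd : ∀ w : ℝ, HasDerivAt (fun ω => g x ω)
      ((-(w * A) + B) * f x w + (w ^ 2 - x - A ^ 2) * g x w) w := by
    intro w
    have h := ((hgcw.differentiable (by simp)) w).hasDerivAt
    rwa [hgw x w] at h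
  -- laxOp formulas
  have lax1 : ∀ (y w : ℝ), laxOp 1 f y w = w * f y w + u y * g y w := by
    intro y w
    show w * f y w + deriv (fun y => f y w) y = _
    rw [hfx y w]
  have lax2 : ∀ (y w : ℝ), laxOp 2 f y w
      = (w ^ 2 + u y ^ 2) * f y w + (w * u y + deriv u y) * g y w := by
    intro y w
    show w * laxOp 1 f y w + deriv (fun y => laxOp 1 f y w) y = _
    have e1 : (fun y => laxOp 1 f y w) = fun y => w * f y w + u y * g y w :=
      funext fun y => lax1 y w
    rw [e1, lax1 y w]
    have hd : HasDerivAt (fun y' => w * f y' w + u y' * g y' w)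
        (w * (u y * g y w) + ((deriv u y) * g y w + u y * (u y * f y w - w * g y w))) y :=
      ((hFx w y).const_mul w).add ((hu y).hasDerivAt.mul (hGx w y))
    rw [hd.deriv]
    ring
  -- the three column functions
  have l0 : (fun w => laxOp 0 f x w) = fun w => f x w := rfl
  have l1 : (fun w => laxOp 1 f x w) = fun w => w * f x w + A * g x w :=
    funext fun w => lax1 x w
  have l2 : (fun w => laxOp 2 f x w)
      = fun w => (w ^ 2 + A ^ 2) * f x w + (w * A + B) * g x w :=
    funext fun w => lax2 x w
  -- first derivative functions of the columns
  have dC0 : deriv (fun w => f x w)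
      = fun w => A ^ 2 * f x w + (-(w * A + B)) * g x w := by
    funext w; rw [hfw x w]; ring
  have dC1 : deriv (fun w => w * f x w + A * g x w)
      = fun w => (1 + A * B) * f x w + (-(w * B) - A * x - A ^ 3) * g x w := by
    funext w
    have h : HasDerivAt (fun t => t * f x t + A * g x t)
        (1 * f x w + w * (A ^ 2 * f x w - (w * A + B) * g x w)
          + A * ((-(w * A) + B) * f x w + (w ^ 2 - x - A ^ 2) * g x w)) w :=
      ((hasDerivAt_id w).mul (hFd w)).add ((hGd w).const_mul A)
    rw [h.deriv]; ring
  have dC2 : deriv (fun w => (w ^ 2 + A ^ 2) * f x w + (w * A + B) * g x w)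
      = fun w => (2 * w + A ^ 4 + B ^ 2) * f x w
          + ((w * A + B) * (-(2 * A ^ 2) - x) + A) * g x w := by
    funext w
    have hP : HasDerivAt (fun t : ℝ => t ^ 2 + A ^ 2) (2 * w) w := by
      simpa using (hasDerivAt_pow 2 w).add_const (A ^ 2)
    have hQ : HasDerivAt (fun t : ℝ => t * A + B) A w := by
      simpa using ((hasDerivAt_id w).mul_const A).add_const B
    have h : HasDerivAt (fun t => (t ^ 2 + A ^ 2) * f x t + (t * A + B) * g x t)
        (2 * w * f x w + (w ^ 2 + A ^ 2) * (A ^ 2 * f x w - (w * A + B) * g x w)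
          + (A * g x w + (w * A + B)
            * ((-(w * A) + B) * f x w + (w ^ 2 - x - A ^ 2) * g x w))) w :=
      pq_hasDerivAt hP (hFd w) hQ (hGd w)
    rw [h.deriv]; ring
  -- values of f, g and their w-derivatives at w = 0
  have F0 : f x 0 = E := hf0 x
  have G0 : g x 0 = -E := hg0 x
  have fv0 : A ^ 2 * f x 0 - ((0:ℝ) * A + B) * g x 0 = (A ^ 2 + B) * E := by
    rw [F0, G0]; ring
  -- the nine entries
  have M00 : iteratedDeriv 0 (fun w => f x w) 0 = E := by
    rw [iteratedDeriv_zero]; exact F0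
  have M01 : iteratedDeriv 0 (fun w => (w:ℝ) * f x w + A * g x w) 0 = -(A * E) := by
    rw [iteratedDeriv_zero]; simp [F0, G0]
  have M02 : iteratedDeriv 0 (fun w => ((w:ℝ) ^ 2 + A ^ 2) * f x w + (w * A + B) * g x w) 0
      = (A ^ 2 - B) * E := by
    rw [iteratedDeriv_zero]; simp [F0, G0]; ring
  have M10 : iteratedDeriv 1 (fun w => f x w) 0 = (A ^ 2 + B) * E := by
    rw [iteratedDeriv_one, dC0]; simp [F0, G0]; ring
  have M11 : iteratedDeriv 1 (fun w => (w:ℝ) * f x w + A * g x w) 0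
      = (1 + A * B + A * x + A ^ 3) * E := by
    rw [iteratedDeriv_one, dC1]; simp [F0, G0]; ring
  have M12 : iteratedDeriv 1 (fun w => ((w:ℝ) ^ 2 + A ^ 2) * f x w + (w * A + B) * g x w) 0
      = (A ^ 4 + B ^ 2 + 2 * A ^ 2 * B - A + x * B) * E := by
    rw [iteratedDeriv_one, dC2]; simp [F0, G0]; ring
  -- second derivatives
  have hit2 : ∀ h : ℝ → ℝ, iteratedDeriv 2 h = deriv (deriv h) := by
    intro h; rw [iteratedDeriv_succ, iteratedDeriv_one]
  have M20 : iteratedDeriv 2 (fun w => f x w) 0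
      = (A ^ 4 + A - B ^ 2 - x * B) * E := by
    rw [hit2, dC0]
    have hQ : HasDerivAt (fun t : ℝ => -(t * A + B)) (-A) 0 := by
      simpa [Pi.neg_def] using (((hasDerivAt_id (0:ℝ)).mul_const A).add_const B).neg
    have h : HasDerivAt (fun t => A ^ 2 * f x t + (-(t * A + B)) * g x t)
        (0 * f x 0 + A ^ 2 * (A ^ 2 * f x 0 - ((0:ℝ) * A + B) * g x 0)
          + (-A * g x 0 + (-((0:ℝ) * A + B))
            * ((-((0:ℝ) * A) + B) * f x 0 + ((0:ℝ) ^ 2 - x - A ^ 2) * g x 0))) 0 :=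
      pq_hasDerivAt (hasDerivAt_const 0 (A ^ 2)) (hFd 0) hQ (hGd 0)
    rw [h.deriv, F0, G0]; ring
  have M21 : iteratedDeriv 2 (fun w => (w:ℝ) * f x w + A * g x w) 0
      = (A ^ 2 + 2 * B + A * B ^ 2 - x * A * B - A * (x + A ^ 2) ^ 2) * E := by
    rw [hit2, dC1]
    have hQ : HasDerivAt (fun t : ℝ => -(t * B) - A * x - A ^ 3) (-B) 0 := by
      have h := ((((hasDerivAt_id (0:ℝ)).mul_const B).neg).sub_const (A * x)).sub_const (A ^ 3)
      simpa using h
    have h : HasDerivAt (fun t => (1 + A * B) * f x t + (-(t * B) - A * x - A ^ 3) * g x t)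
        (0 * f x 0 + (1 + A * B) * (A ^ 2 * f x 0 - ((0:ℝ) * A + B) * g x 0)
          + (-B * g x 0 + (-((0:ℝ) * B) - A * x - A ^ 3)
            * ((-((0:ℝ) * A) + B) * f x 0 + ((0:ℝ) ^ 2 - x - A ^ 2) * g x 0))) 0 :=
      pq_hasDerivAt (hasDerivAt_const 0 (1 + A * B)) (hFd 0) hQ (hGd 0)
    rw [h.deriv, F0, G0]; ring
  have M22 : iteratedDeriv 2 (fun w => ((w:ℝ) ^ 2 + A ^ 2) * f x w + (w * A + B) * g x w) 0
      = (2 + A ^ 2 * (A ^ 4 + A - B ^ 2 - x * B) + 2 * A * (B + x + A ^ 2)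
          + B * (-A + B ^ 2 - x * B - (x + A ^ 2) ^ 2)) * E := by
    rw [hit2, dC2]
    have hP : HasDerivAt (fun t : ℝ => 2 * t + A ^ 4 + B ^ 2) 2 0 := by
      have h := (((hasDerivAt_id (0:ℝ)).const_mul (2:ℝ)).add_const (A ^ 4)).add_const (B ^ 2)
      simpa using h
    have hQ : HasDerivAt (fun t : ℝ => (t * A + B) * (-(2 * A ^ 2) - x) + A)
        (A * (-(2 * A ^ 2) - x)) 0 := by
      simpa using ((((hasDerivAt_id (0:ℝ)).mul_const A).add_const B).mul_const
        (-(2 * A ^ 2) - x)).add_const A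
    have h : HasDerivAt (fun t => (2 * t + A ^ 4 + B ^ 2) * f x t
          + ((t * A + B) * (-(2 * A ^ 2) - x) + A) * g x t)
        (2 * f x 0 + (2 * 0 + A ^ 4 + B ^ 2)
            * (A ^ 2 * f x 0 - ((0:ℝ) * A + B) * g x 0)
          + (A * (-(2 * A ^ 2) - x) * g x 0 + (((0:ℝ) * A + B) * (-(2 * A ^ 2) - x) + A)
            * ((-((0:ℝ) * A) + B) * f x 0 + ((0:ℝ) ^ 2 - x - A ^ 2) * g x 0))) 0 :=
      pq_hasDerivAt hP (hFd 0) hQ (hGd 0)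
    rw [h.deriv, F0, G0]; ring
  -- assemble the determinant
  rw [Matrix.det_fin_three]
  simp only [Matrix.of_apply, Fin.val_zero, Fin.val_one, Fin.val_two, l0, l1, l2,
    M00, M01, M02, M10, M11, M12, M20, M21, M22]
  ring
end
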